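/- arXiv:1803.08157 — 7 statements merged into one kernel-verified Lean document; each statement's English description precedes it below -/
import Mathlib

section
/- Let Q₁, Q₂ be real symmetric positive definite d×d matrices, and for β > 0 define Q(β) := (1 + 1/β)Q₁ + (1 + β)Q₂. Let λ₁,…,λ_d > 0 be the eigenvalues (with multiplicity) of the symmetric positive definite matrix Q₂^{1/2} Q₁⁻¹ Q₂^{1/2}. Then for every β > 0, the derivative of β ↦ log det Q(β) equals −(1/(β(1+β))) · Σ_{i=1}^{d} (1 − β²λᵢ)/(1 + βλᵢ). -/
/-!
Write `S = Q₂^{1/2}` and `M = S Q₁⁻¹ S`. Since `a Q₁ + c Q₂ = (a + c S S Q₁⁻¹) Q₁` and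
`det (a + c X Y) = det (a + c Y X)`, we get `det (a Q₁ + c Q₂) = det Q₁ · ∏ᵢ (a + c λᵢ)`.
As `M` is positive semidefinite, `λᵢ ≥ 0`, so every factor is positive for `β > 0` and
`log det Q(β) = log det Q₁ + ∑ᵢ log (1 + 1/β + (1 + β) λᵢ)`. Each summand is
`log ((1 + β)(1 + βλᵢ)/β)`, whose derivative is the `i`-th term of the claimed sum.
-/

open Matrix

section OldSqrt

open scoped ComplexOrder

/-- The square root of a positive semidefinite matrix, as `Matrix.PosSemidef.sqrt` was defined
in Mathlib of December 2024 (removed since then). -/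
noncomputable def Matrix.PosSemidef.sqrt {n : Type*} [Fintype n] [DecidableEq n] {𝕜 : Type*} [RCLike 𝕜]
    {A : Matrix n n 𝕜} (hA : A.PosSemidef) : Matrix n n 𝕜 :=
  hA.1.eigenvectorUnitary.1 * diagonal ((↑) ∘ Real.sqrt ∘ hA.1.eigenvalues) *
    (star hA.1.eigenvectorUnitary : Matrix n n 𝕜)

end OldSqrt

namespace Matrix.PosSemidef

open scoped ComplexOrder

variable {n : Type*} [Fintype n] [DecidableEq n] {𝕜 : Type*} [RCLike 𝕜] {A : Matrix n n 𝕜}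

theorem sqrt_eq_conjStarAlgAut (hA : A.PosSemidef) :
    hA.sqrt = Unitary.conjStarAlgAut 𝕜 _ hA.1.eigenvectorUnitary
      (diagonal (RCLike.ofReal ∘ Real.sqrt ∘ hA.1.eigenvalues)) := rfl

theorem sqrt_mul_sqrt (hA : A.PosSemidef) : hA.sqrt * hA.sqrt = A := by
  conv_rhs => rw [hA.1.spectral_theorem]
  rw [sqrt_eq_conjStarAlgAut, ← map_mul, diagonal_mul_diagonal]
  congr 2
  ext i
  simp [← RCLike.ofReal_mul, Real.mul_self_sqrt (hA.eigenvalues_nonneg i)]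

theorem isHermitian_sqrt (hA : A.PosSemidef) : hA.sqrt.IsHermitian := by
  rw [IsHermitian, ← star_eq_conjTranspose, sqrt_eq_conjStarAlgAut, ← map_star,
    star_eq_conjTranspose, diagonal_conjTranspose]
  congr 3
  ext i
  simp

end Matrix.PosSemidef

namespace Matrix

variable {n : Type*} [Fintype n] [DecidableEq n]

theorem det_smul_one_add_smul_mul_comm {R : Type*} [CommRing R] (X Y : Matrix n n R) (a c : R) :
    det (a • 1 + c • (X * Y)) = det (a • 1 + c • (Y * X)) := by
  have hcharpoly (Z : Matrix n n R) : det (a • 1 + c • Z) = (-c • Z).charpoly.eval a := by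
    rw [eval_charpoly, sub_eq_add_neg, ← neg_smul, neg_neg, smul_one_eq_diagonal]
    rfl
  rw [hcharpoly, hcharpoly, ← mul_smul_comm, ← smul_mul_assoc, charpoly_mul_comm]

theorem det_smul_add_smul_mul_self {R : Type*} [CommRing R] {Q : Matrix n n R}
    (hQ : IsUnit Q.det) (S : Matrix n n R) (a c : R) :
    det (a • Q + c • (S * S)) = det Q * det (a • 1 + c • (S * Q⁻¹ * S)) := by
  have hfactor : a • Q + c • (S * S) = (a • 1 + c • (S * (S * Q⁻¹))) * Q := by
    rw [add_mul, smul_mul_assoc, one_mul, smul_mul_assoc, Matrix.mul_assoc, Matrix.mul_assoc,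
      nonsing_inv_mul _ hQ, mul_one]
  rw [hfactor, det_mul, mul_comm, det_smul_one_add_smul_mul_comm, Matrix.mul_assoc]

theorem IsHermitian.det_smul_one_add_smul {𝕜 : Type*} [RCLike 𝕜] {A : Matrix n n 𝕜}
    (hA : A.IsHermitian) (a c : 𝕜) :
    det (a • 1 + c • A) = ∏ i, (a + c * hA.eigenvalues i) := by
  set U := hA.eigenvectorUnitary
  have hconj : a • 1 + c • A =
      Unitary.conjStarAlgAut 𝕜 _ U (a • 1 + c • diagonal (RCLike.ofReal ∘ hA.eigenvalues)) := by
    rw [map_add, map_smul, map_smul, map_one, ← hA.spectral_theorem]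
  rw [hconj, Unitary.conjStarAlgAut_apply, det_mul_comm, ← Matrix.mul_assoc,
    Unitary.star_mul_self_of_mem U.2, one_mul, smul_one_eq_diagonal, ← diagonal_smul,
    diagonal_add, det_diagonal]
  simp

end Matrix

theorem hasDerivAt_log_one_add_inv_add_mul {β l : ℝ} (hβ : β ≠ 0) (h1β : 1 + β ≠ 0)
    (hl : 1 + β * l ≠ 0) :
    HasDerivAt (fun b : ℝ => Real.log (1 + 1 / b + (1 + b) * l))
      (-(1 / (β * (1 + β))) * ((1 - β ^ 2 * l) / (1 + β * l))) β := by
  have hfactor : 1 + 1 / β + (1 + β) * l = (1 + β) * (1 + β * l) / β := by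
    field_simp
    ring
  have hinner : HasDerivAt (fun b : ℝ => 1 + 1 / b + (1 + b) * l) (-(β ^ 2)⁻¹ + l) β := by
    simpa only [one_div, one_mul] using
      ((hasDerivAt_inv hβ).const_add 1).fun_add (((hasDerivAt_id' β).const_add 1).mul_const l)
  convert hinner.log (by rw [hfactor]; positivity) using 1
  rw [hfactor]
  field_simp
  ring

/-- For real symmetric positive definite `d × d` matrices `Q₁, Q₂`, with
`Q(β) := (1 + 1/β) Q₁ + (1 + β) Q₂` and `λ₁, …, λ_d` the eigenvalues (with multiplicity) of
`Q₂^{1/2} * Q₁⁻¹ * Q₂^{1/2}`, the derivative of `β ↦ log det Q(β)` at any `β > 0` equals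
`-(1/(β(1+β))) * ∑ i, (1 - β²λᵢ)/(1 + βλᵢ)`. -/
theorem deriv_logdet_Q
    (d : ℕ) (Q₁ Q₂ : Matrix (Fin d) (Fin d) ℝ)
    (hQ₁ : Q₁.PosDef) (hQ₂ : Q₂.PosDef)
    (hM : (hQ₂.posSemidef.sqrt * Q₁⁻¹ * hQ₂.posSemidef.sqrt).IsHermitian)
    (lam : Fin d → ℝ) (hlam : lam = hM.eigenvalues)
    (β : ℝ) (hβ : 0 < β) :
    HasDerivAt (fun b : ℝ => Real.log ((1 + 1 / b) • Q₁ + (1 + b) • Q₂).det)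
      (-(1 / (β * (1 + β))) * ∑ i, (1 - β ^ 2 * lam i) / (1 + β * lam i)) β := by
  have hlam_nonneg (i : Fin d) : 0 ≤ lam i := by
    have hMpsd := hQ₁.inv.posSemidef.mul_mul_conjTranspose_same hQ₂.posSemidef.sqrt
    rw [hQ₂.posSemidef.isHermitian_sqrt.eq] at hMpsd
    exact hlam ▸ hMpsd.eigenvalues_nonneg i
  have hfactor_pos {b : ℝ} (hb : 0 < b) (i : Fin d) : 0 < 1 + 1 / b + (1 + b) * lam i :=
    add_pos_of_pos_of_nonneg (by positivity) (mul_nonneg (by positivity) (hlam_nonneg i))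
  have hdet (b : ℝ) :
      ((1 + 1 / b) • Q₁ + (1 + b) • Q₂).det = Q₁.det * ∏ i, (1 + 1 / b + (1 + b) * lam i) := by
    rw [← hQ₂.posSemidef.sqrt_mul_sqrt, det_smul_add_smul_mul_self hQ₁.det_pos.ne'.isUnit,
      hM.det_smul_one_add_smul]
    simp only [hlam, RCLike.ofReal_real_eq_id, id]
  have hlog : (fun b : ℝ => Real.log ((1 + 1 / b) • Q₁ + (1 + b) • Q₂).det) =ᶠ[nhds β]
      fun b => Real.log Q₁.det + ∑ i, Real.log (1 + 1 / b + (1 + b) * lam i) := by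
    filter_upwards [Ioi_mem_nhds hβ] with b hb
    rw [hdet, Real.log_mul hQ₁.det_pos.ne' (Finset.prod_pos fun i _ ↦ hfactor_pos hb i).ne',
      Real.log_prod fun i _ ↦ (hfactor_pos hb i).ne']
  rw [Finset.mul_sum]
  refine ((HasDerivAt.fun_sum fun i _ ↦ ?_).const_add _).congr_of_eventuallyEq hlog
  exact hasDerivAt_log_one_add_inv_add_mul hβ.ne' (by positivity)
    (by have := hlam_nonneg i; positivity)
end

section
/- Let d ≥ 1 and λ₁,…,λ_d > 0, and define the polynomial p_{d+1}(β) := Σ_{i=1}^{d} (β²λᵢ − 1) · Π_{j≠i} (βλⱼ + 1). Then p_{d+1} has exactly one positive real root: there exists a unique β₊ > 0 with p_{d+1}(β₊) = 0. -/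
/-!
Dividing by the positive product `∏ⱼ (βλⱼ + 1)` turns `p_{d+1}(β)` into
`∑ᵢ (β²λᵢ - 1) / (βλᵢ + 1)`, a sum of functions that are continuous and strictly increasing on
`[0, ∞)`. This sum is `-d < 0` at `β = 0` and positive once `β ≥ 1` and `βλᵢ > 1` for all `i`,
so it has exactly one positive zero.
-/

open Finset
open Set (Ici Icc_subset_Ici_self mem_Ici)

theorem Finset.sum_mul_prod_erase_eq_prod_mul_sum_div {ι K : Type*} [DecidableEq ι] [Field K]
    (s : Finset ι) (f g : ι → K) (hg : ∀ i ∈ s, g i ≠ 0) :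
    ∑ i ∈ s, f i * ∏ j ∈ s.erase i, g j = (∏ j ∈ s, g j) * ∑ i ∈ s, f i / g i := by
  rw [mul_sum]
  refine sum_congr rfl fun i hi => ?_
  rw [← mul_prod_erase s g hi]
  field_simp [hg i hi]

theorem StrictMonoOn.existsUnique_pos_eq_zero {f : ℝ → ℝ} (hmono : StrictMonoOn f (Ici 0))
    (hcont : ContinuousOn f (Ici 0)) (h0 : f 0 < 0) {B : ℝ} (hB : 0 ≤ B) (hfB : 0 < f B) :
    ∃! β, 0 < β ∧ f β = 0 := by
  obtain ⟨β, hβ, hfβ⟩ :=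
    intermediate_value_Ioo hB (hcont.mono Icc_subset_Ici_self) (show (0 : ℝ) ∈ _ from ⟨h0, hfB⟩)
  refine ⟨β, ⟨hβ.1, hfβ⟩, fun γ ⟨hγ, hfγ⟩ => ?_⟩
  exact hmono.injOn (mem_Ici.mpr hγ.le) (mem_Ici.mpr hβ.1.le) (hfγ.trans hfβ.symm)

section RatioTerm

variable {c : ℝ}

lemma mul_add_one_pos (hc : 0 < c) {β : ℝ} (hβ : 0 ≤ β) : 0 < β * c + 1 := by
  positivity

lemma strictMonoOn_sq_mul_sub_one_div_mul_add_one (hc : 0 < c) :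
    StrictMonoOn (fun β : ℝ => (β ^ 2 * c - 1) / (β * c + 1)) (Ici 0) := by
  intro a (ha : 0 ≤ a) b (hb : 0 ≤ b) hab
  rw [div_lt_div_iff₀ (mul_add_one_pos hc ha) (mul_add_one_pos hc hb)]
  have hcross : (b ^ 2 * c - 1) * (a * c + 1) - (a ^ 2 * c - 1) * (b * c + 1)
      = c * (b - a) * (a * b * c + a + b + 1) := by ring
  have : 0 < c * (b - a) * (a * b * c + a + b + 1) := by
    have := sub_pos.mpr hab
    positivity
  linarith

lemma continuousOn_sq_mul_sub_one_div_mul_add_one (hc : 0 < c) :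
    ContinuousOn (fun β : ℝ => (β ^ 2 * c - 1) / (β * c + 1)) (Ici 0) :=
  ContinuousOn.div (by fun_prop) (by fun_prop) fun _ hβ => (mul_add_one_pos hc hβ).ne'

lemma sq_mul_sub_one_div_mul_add_one_pos {β : ℝ} (hβ : 1 ≤ β) (hβc : 1 < β * c) :
    0 < (β ^ 2 * c - 1) / (β * c + 1) := by
  have : β * c ≤ β ^ 2 * c := by nlinarith
  exact div_pos (by linarith) (by linarith)

end RatioTerm

section RatioSum

variable {ι : Type*} [Fintype ι] {lam : ι → ℝ}

/-- `p_{d+1}(β) / ∏ⱼ (βλⱼ + 1)`. -/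
noncomputable def ratioSum (lam : ι → ℝ) (β : ℝ) : ℝ :=
  ∑ i, (β ^ 2 * lam i - 1) / (β * lam i + 1)

lemma strictMonoOn_ratioSum [Nonempty ι] (hlam : ∀ i, 0 < lam i) :
    StrictMonoOn (ratioSum lam) (Ici 0) := fun _ ha _ hb hab =>
  sum_lt_sum_of_nonempty univ_nonempty fun i _ =>
    strictMonoOn_sq_mul_sub_one_div_mul_add_one (hlam i) ha hb hab

lemma continuousOn_ratioSum (hlam : ∀ i, 0 < lam i) : ContinuousOn (ratioSum lam) (Ici 0) :=
  continuousOn_finsetSum _ fun i _ => continuousOn_sq_mul_sub_one_div_mul_add_one (hlam i)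

lemma ratioSum_zero_neg [Nonempty ι] : ratioSum lam 0 < 0 := by
  simp [ratioSum, Fintype.card_pos]

lemma exists_one_le_ratioSum_pos [Nonempty ι] (hlam : ∀ i, 0 < lam i) :
    ∃ B, 1 ≤ B ∧ 0 < ratioSum lam B := by
  have hinv : ∀ i, 0 ≤ (lam i)⁻¹ := fun i => (inv_pos.mpr (hlam i)).le
  have hB : 1 ≤ 1 + ∑ i, (lam i)⁻¹ := le_add_of_nonneg_right (sum_nonneg fun i _ => hinv i)
  refine ⟨_, hB, sum_pos (fun i _ => sq_mul_sub_one_div_mul_add_one_pos hB ?_) univ_nonempty⟩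
  have : (lam i)⁻¹ ≤ ∑ j, (lam j)⁻¹ := single_le_sum (fun j _ => hinv j) (mem_univ i)
  have : (lam i)⁻¹ * lam i = 1 := inv_mul_cancel₀ (hlam i).ne'
  nlinarith [hlam i]

end RatioSum

/-- For `d ≥ 1` and `λ₁, …, λ_d > 0`, the polynomial
`p_{d+1}(β) := ∑ i, (β²λᵢ - 1) ∏_{j ≠ i} (βλⱼ + 1)` has exactly one positive real root. -/
theorem unique_positive_root
    (d : ℕ) (hd : 1 ≤ d) (lam : Fin d → ℝ) (hlam : ∀ i, 0 < lam i) :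
    ∃! β : ℝ, 0 < β ∧
      (∑ i, (β ^ 2 * lam i - 1) * ∏ j ∈ univ.erase i, (β * lam j + 1)) = 0 := by
  have : Nonempty (Fin d) := ⟨⟨0, hd⟩⟩
  have hroot : ∀ β : ℝ, (0 < β ∧
      (∑ i, (β ^ 2 * lam i - 1) * ∏ j ∈ univ.erase i, (β * lam j + 1)) = 0) ↔
        (0 < β ∧ ratioSum lam β = 0) := by
    refine fun β => and_congr_right fun hβ => ?_
    have hfac : ∀ j, 0 < β * lam j + 1 := fun j => mul_add_one_pos (hlam j) hβ.le
    rw [sum_mul_prod_erase_eq_prod_mul_sum_div _ _ _ fun j _ => (hfac j).ne',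
      mul_eq_zero, or_iff_right (prod_pos fun j _ => hfac j).ne', ratioSum]
  obtain ⟨B, hB, hfB⟩ := exists_one_le_ratioSum_pos hlam
  exact (existsUnique_congr hroot).mpr <|
    (strictMonoOn_ratioSum hlam).existsUnique_pos_eq_zero (continuousOn_ratioSum hlam)
      ratioSum_zero_neg (zero_le_one.trans hB) hfB
end

section
/- Let Q₁, Q₂ be real symmetric positive definite d×d matrices (d ≥ 1), and for β > 0 define Q(β) := (1 + 1/β)Q₁ + (1 + β)Q₂. Then the function β ↦ log det Q(β) on (0,∞) attains a strict global minimum at a unique point β₊ > 0, and β₊ is the unique positive solution of Σ_{i=1}^{d} (1 − β²λᵢ)/(1 + βλᵢ) = 0, where λ₁,…,λ_d > 0 are the eigenvalues of Q₂^{1/2} Q₁⁻¹ Q₂^{1/2}. -/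
/-!
With `S = Q₂^{1/2}` and `M = S Q₁⁻¹ S`, one has `S (a + b M) S = Q₂ Q₁⁻¹ (a Q₁ + b Q₂)`, so
`det (a Q₁ + b Q₂) = det Q₁ · ∏ᵢ (a + b λᵢ)` and
`log det Q(β) = log det Q₁ + ∑ᵢ log (1 + β⁻¹ + (1 + β) λᵢ)`.
The derivative of the sum is `-g(β) / (β (1 + β))` with `g(β) = ∑ᵢ (1 - β²λᵢ)/(1 + βλᵢ)`.
Since `M` is positive definite, `λᵢ > 0`, so `g` is strictly decreasing on `[0, ∞)` with
`g 0 = d > 0` and `g < 0` eventually: it has a unique positive zero `β₊`, to the left of which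
`log det Q` decreases and to the right of which it increases.
-/

open Matrix Set Filter Topology
open scoped MatrixOrder

namespace Matrix

open scoped ComplexOrder

variable {n : Type*} [Fintype n] [DecidableEq n]

theorem IsHermitian.det_smul_one_add_smul_s10 {M : Matrix n n ℝ} (hM : M.IsHermitian) (a b : ℝ) :
    (a • (1 : Matrix n n ℝ) + b • M).det = ∏ i, (a + b * hM.eigenvalues i) := by
  have hcfc : a • (1 : Matrix n n ℝ) + b • M = cfc (fun x => a + b * x) M := by
    rw [cfc_add .., cfc_const_mul .., cfc_id' .., cfc_const ..]
    simp [Algebra.algebraMap_eq_smul_one]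
  rw [hcfc, hM.cfc_eq]
  simp [IsHermitian.cfc, -Unitary.conjStarAlgAut_apply]

theorem det_smul_add_smul_eq_det_mul_det {K : Type*} [Field K] {Q₁ Q₂ S : Matrix n n K}
    (hQ₁ : IsUnit Q₁.det) (hQ₂ : Q₂.det ≠ 0) (hS : S * S = Q₂) (a b : K) :
    (a • Q₁ + b • Q₂).det = Q₁.det * (a • (1 : Matrix n n K) + b • (S * Q₁⁻¹ * S)).det := by
  subst hS
  have hconj : S * (a • 1 + b • (S * Q₁⁻¹ * S)) * S = S * S * Q₁⁻¹ * (a • Q₁ + b • (S * S)) := by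
    simp only [mul_add, add_mul, Matrix.mul_smul, Matrix.smul_mul, mul_one, Matrix.mul_assoc,
      Matrix.nonsing_inv_mul _ hQ₁]
  have hdet := congrArg det hconj
  simp only [det_mul, det_nonsing_inv, Ring.inverse_eq_inv'] at hdet hQ₂
  have hQ₁' : Q₁.det ≠ 0 := hQ₁.ne_zero
  field_simp at hdet
  apply mul_left_cancel₀ hQ₂
  linear_combination -hdet

theorem PosDef.sqrt_mul_inv_mul_sqrt {𝕜 : Type*} [RCLike 𝕜] {A B : Matrix n n 𝕜}
    (hA : A.PosDef) (hB : B.PosDef) : (CFC.sqrt B * A⁻¹ * CFC.sqrt B).PosDef := by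
  have hS : (CFC.sqrt B).PosDef := (hB.isStrictlyPositive.sqrt B).posDef
  have hinj : Function.Injective (CFC.sqrt B).mulVec :=
    mulVec_injective_iff_isUnit.2 (isUnit_iff_isUnit_det _ |>.2 hS.det_pos.ne'.isUnit)
  simpa only [hS.isHermitian.eq] using hA.inv.conjTranspose_mul_mul_same hinj

end Matrix

theorem lt_of_hasDerivAt_neg_of_pos {f f' : ℝ → ℝ} {a c x : ℝ} (hac : a < c)
    (hf : ∀ y, a < y → HasDerivAt f (f' y) y) (hneg : ∀ y ∈ Ioo a c, f' y < 0)
    (hpos : ∀ y, c < y → 0 < f' y) (hax : a < x) (hxc : x ≠ c) : f c < f x := by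
  have hcont : ∀ s ⊆ Ioi a, ContinuousOn f s := fun s hs y hy =>
    (hf y (hs hy)).continuousAt.continuousWithinAt
  rcases hxc.lt_or_gt with hxc | hcx
  · have hanti : StrictAntiOn f (Ioc a c) :=
      strictAntiOn_of_deriv_neg (convex_Ioc a c) (hcont _ Ioc_subset_Ioi_self) fun y hy => by
        rw [interior_Ioc] at hy
        exact (hf y hy.1).deriv ▸ hneg y hy
    exact hanti ⟨hax, hxc.le⟩ ⟨hac, le_rfl⟩ hxc
  · have hmono : StrictMonoOn f (Ici c) :=
      strictMonoOn_of_deriv_pos (convex_Ici c) (hcont _ fun y hy => hac.trans_le hy) fun y hy => by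
        rw [interior_Ici] at hy
        exact (hf y (hac.trans hy)).deriv ▸ hpos y hy
    exact hmono (le_refl c) hcx.le hcx

section

variable {ι : Type*} [Fintype ι] {lam : ι → ℝ}

noncomputable def criticalSum (lam : ι → ℝ) (β : ℝ) : ℝ :=
  ∑ i, (1 - β ^ 2 * lam i) / (1 + β * lam i)

noncomputable def logDetProfile (lam : ι → ℝ) (β : ℝ) : ℝ :=
  ∑ i, Real.log (1 + β⁻¹ + (1 + β) * lam i)

theorem strictAntiOn_one_sub_sq_mul_div {c : ℝ} (hc : 0 < c) :
    StrictAntiOn (fun β : ℝ => (1 - β ^ 2 * c) / (1 + β * c)) (Ici 0) := by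
  intro a (ha : 0 ≤ a) b (hb : 0 ≤ b) hab
  have hca : 0 < 1 + a * c := by positivity
  have hcb : 0 < 1 + b * c := by positivity
  rw [div_lt_div_iff₀ hcb hca, ← sub_pos]
  have hba : 0 < b - a := sub_pos.2 hab
  calc 0 < (b - a) * c * (1 + a + b + a * b * c) := by positivity
    _ = _ := by ring

theorem criticalSum_strictAntiOn [Nonempty ι] (hlam : ∀ i, 0 < lam i) :
    StrictAntiOn (criticalSum lam) (Ici 0) := fun _ ha _ hb hab =>
  Finset.sum_lt_sum_of_nonempty Finset.univ_nonempty fun i _ =>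
    strictAntiOn_one_sub_sq_mul_div (hlam i) ha hb hab

theorem criticalSum_continuousOn (hlam : ∀ i, 0 < lam i) :
    ContinuousOn (criticalSum lam) (Ici 0) :=
  continuousOn_finsetSum _ fun i _ => ContinuousOn.div (by fun_prop) (by fun_prop)
    fun β (hβ : 0 ≤ β) => by have := hlam i; positivity

theorem eventually_criticalSum_neg [Nonempty ι] (hlam : ∀ i, 0 < lam i) :
    ∀ᶠ β in atTop, criticalSum lam β < 0 := by
  have hlarge : ∀ᶠ β in atTop, 0 ≤ β ∧ ∀ i, 1 < β ^ 2 * lam i :=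
    (eventually_ge_atTop 0).and <| eventually_all.2 fun i =>
      ((tendsto_pow_atTop two_ne_zero).atTop_mul_const (hlam i)).eventually_gt_atTop 1
  filter_upwards [hlarge] with β ⟨hβ, hβlam⟩
  refine Finset.sum_neg (fun i _ => div_neg_of_neg_of_pos ?_ ?_) Finset.univ_nonempty
  · linarith [hβlam i]
  · have := hlam i; positivity

theorem existsUnique_pos_criticalSum_eq_zero [Nonempty ι] (hlam : ∀ i, 0 < lam i) :
    ∃! β, 0 < β ∧ criticalSum lam β = 0 := by
  have hzero : criticalSum lam 0 = Fintype.card ι := by simp [criticalSum]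
  obtain ⟨b, hb, hb0⟩ := ((eventually_criticalSum_neg hlam).and (eventually_ge_atTop 0)).exists
  obtain ⟨c, hc, hgc⟩ := intermediate_value_Icc' hb0
    ((criticalSum_continuousOn hlam).mono Icc_subset_Ici_self)
    ⟨hb.le, hzero ▸ Nat.cast_nonneg _⟩
  have hc0 : 0 < c := hc.1.lt_of_ne' fun h => by
    simp [h, hzero] at hgc
  refine ⟨c, ⟨hc0, hgc⟩, fun β ⟨hβ, hgβ⟩ => ?_⟩
  exact (criticalSum_strictAntiOn hlam).injOn hβ.le hc0.le (hgβ.trans hgc.symm)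

theorem hasDerivAt_logDetProfile (hlam : ∀ i, 0 < lam i) {β : ℝ} (hβ : 0 < β) :
    HasDerivAt (logDetProfile lam) (-criticalSum lam β / (β * (1 + β))) β := by
  have hterm : ∀ i, HasDerivAt (fun β => Real.log (1 + β⁻¹ + (1 + β) * lam i))
      (-((1 - β ^ 2 * lam i) / (1 + β * lam i)) / (β * (1 + β))) β := by
    intro i
    have hu : 0 < 1 + β⁻¹ + (1 + β) * lam i := by have := hlam i; positivity
    have hv : 0 < 1 + β * lam i := by have := hlam i; positivity
    have hinner : HasDerivAt (fun β : ℝ => 1 + β⁻¹ + (1 + β) * lam i) (lam i - (β ^ 2)⁻¹) β :=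
      (((hasDerivAt_inv hβ.ne').const_add 1).add
        (((hasDerivAt_id β).const_add 1).mul_const (lam i))).congr_deriv (by ring)
    have hfac : 1 + β⁻¹ + (1 + β) * lam i = (1 + β) * (1 + β * lam i) / β := by
      field_simp; ring
    convert hinner.log hu.ne' using 1
    rw [hfac]
    field_simp
    ring
  have hsum := HasDerivAt.fun_sum (u := Finset.univ) fun i _ => hterm i
  refine hsum.congr_deriv ?_
  simp only [criticalSum, neg_div, Finset.sum_div, Finset.sum_neg_distrib]

theorem logDetProfile_lt [Nonempty ι] (hlam : ∀ i, 0 < lam i) {c β : ℝ} (hc : 0 < c)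
    (hgc : criticalSum lam c = 0) (hβ : 0 < β) (hβc : β ≠ c) :
    logDetProfile lam c < logDetProfile lam β := by
  have hanti := criticalSum_strictAntiOn hlam
  refine lt_of_hasDerivAt_neg_of_pos hc (fun y hy => hasDerivAt_logDetProfile hlam hy)
    (fun y ⟨hy, hyc⟩ => ?_) (fun y hcy => ?_) hβ hβc
  · have : 0 < criticalSum lam y := hgc ▸ hanti hy.le hc.le hyc
    exact div_neg_of_neg_of_pos (neg_neg_of_pos this) (by positivity)
  · have hy : 0 < y := hc.trans hcy
    have : criticalSum lam y < 0 := hgc ▸ hanti hc.le hy.le hcy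
    exact div_pos (neg_pos.2 this) (by positivity)

end

/-- For real symmetric positive definite `d × d` matrices `Q₁, Q₂` (`d ≥ 1`)
and `Q(β) := (1 + 1/β) Q₁ + (1 + β) Q₂`, the function `β ↦ log det Q(β)` on `(0, ∞)` attains a
strict global minimum at a unique point `β₊ > 0`, and `β₊` is the unique positive solution of
`∑ i, (1 - β²λᵢ)/(1 + βλᵢ) = 0`, where `λ₁, …, λ_d > 0` are the eigenvalues of
`Q₂^{1/2} Q₁⁻¹ Q₂^{1/2}`. -/
theorem logdet_Q_unique_global_min
    (d : ℕ) (hd : 1 ≤ d) (Q₁ Q₂ : Matrix (Fin d) (Fin d) ℝ)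
    (hQ₁ : Q₁.PosDef) (hQ₂ : Q₂.PosDef)
    (hM : (CFC.sqrt Q₂ * Q₁⁻¹ * CFC.sqrt Q₂).IsHermitian)
    (lam : Fin d → ℝ) (hlam : lam = hM.eigenvalues) :
    ∃! βp : ℝ, 0 < βp ∧
      (∀ β : ℝ, 0 < β → β ≠ βp →
        Real.log ((1 + 1 / βp) • Q₁ + (1 + βp) • Q₂).det
          < Real.log ((1 + 1 / β) • Q₁ + (1 + β) • Q₂).det) ∧
      (∑ i, (1 - βp ^ 2 * lam i) / (1 + βp * lam i)) = 0 ∧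
      (∀ β : ℝ, 0 < β → (∑ i, (1 - β ^ 2 * lam i) / (1 + β * lam i)) = 0 → β = βp) := by
  subst hlam
  have : Nonempty (Fin d) := ⟨⟨0, hd⟩⟩
  have hpos : ∀ i, 0 < hM.eigenvalues i := (hQ₁.sqrt_mul_inv_mul_sqrt hQ₂).eigenvalues_pos
  have hlogdet : ∀ β, 0 < β → Real.log ((1 + 1 / β) • Q₁ + (1 + β) • Q₂).det
      = Real.log Q₁.det + logDetProfile hM.eigenvalues β := by
    intro β hβ
    have hfactor : ∀ i, 0 < 1 + β⁻¹ + (1 + β) * hM.eigenvalues i := fun i => by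
      have := hpos i; positivity
    rw [one_div, det_smul_add_smul_eq_det_mul_det hQ₁.det_pos.ne'.isUnit hQ₂.det_pos.ne'
        (CFC.sqrt_mul_sqrt_self Q₂ hQ₂.posSemidef.nonneg), hM.det_smul_one_add_smul_s10,
      Real.log_mul hQ₁.det_pos.ne' (Finset.prod_pos fun i _ => hfactor i).ne',
      Real.log_prod fun i _ => (hfactor i).ne', logDetProfile]
  obtain ⟨c, ⟨hc, hgc⟩, huniq⟩ := existsUnique_pos_criticalSum_eq_zero hpos
  refine ⟨c, ⟨hc, fun β hβ hβc => ?_, hgc, fun β hβ hgβ => huniq β ⟨hβ, hgβ⟩⟩,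
    fun β hβ => huniq β ⟨hβ.1, hβ.2.2.1⟩⟩
  rw [hlogdet c hc, hlogdet β hβ]
  exact add_lt_add_right (logDetProfile_lt hpos hc hgc hβ hβc) _
end

section
/- Let λ₁, λ₂ > 0 and define the cubic p₃(β) := 2λ₁λ₂β³ + (λ₁+λ₂)β² − (λ₁+λ₂)β − 2. Then p₃ has a unique positive root β₊, and β₊ satisfies the bounds (√((λ₁+λ₂)(λ₁+λ₂+6λ₁λ₂)) − (λ₁+λ₂))/(6λ₁λ₂) < β₊ < min{ (λ₁+√(λ₁(λ₁+8)))/(2λ₁), (λ₂+√(λ₂(λ₂+8)))/(2λ₂) }. -/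
/-!
On `β > 0` the quotient `p₃(β) / β² = 2λ₁λ₂β + (λ₁+λ₂) - (λ₁+λ₂)/β - 2/β²` is strictly
increasing, so a positive root is unique and every other positive point lies below or above it
according to the sign of `p₃` there. Since `p₃(0) = -2`, a root exists below any positive point
where `p₃ > 0`.

The upper endpoint `uᵢ = (λᵢ + √(λᵢ(λᵢ+8)))/(2λᵢ)` is the positive root of `λᵢu² - λᵢu - 2`,
so `p₃(uᵢ) = 2λ₁λ₂uᵢ³ + λⱼ(uᵢ² - uᵢ) > 0`. The lower endpoint `L` is the positive critical point
of `p₃`, i.e. `6λ₁λ₂L² + 2(λ₁+λ₂)L = λ₁+λ₂`, whence `p₃(L) = -4λ₁λ₂L³ - (λ₁+λ₂)L² - 2 < 0`.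
-/

open Real Set

def p₃ (l₁ l₂ β : ℝ) : ℝ := 2 * l₁ * l₂ * β ^ 3 + (l₁ + l₂) * β ^ 2 - (l₁ + l₂) * β - 2

noncomputable def lowerBracket (l₁ l₂ : ℝ) : ℝ :=
  (√((l₁ + l₂) * (l₁ + l₂ + 6 * l₁ * l₂)) - (l₁ + l₂)) / (6 * l₁ * l₂)

noncomputable def upperBracket (l : ℝ) : ℝ := (l + √(l * (l + 8))) / (2 * l)

section

variable {l₁ l₂ : ℝ}

theorem p₃_comm (l₁ l₂ β : ℝ) : p₃ l₁ l₂ β = p₃ l₂ l₁ β := by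
  unfold p₃; ring

theorem p₃_zero : p₃ l₁ l₂ 0 = -2 := by
  simp [p₃]

theorem continuous_p₃ : Continuous (p₃ l₁ l₂) := by
  unfold p₃; fun_prop

theorem strictMonoOn_p₃_div_sq (h₁ : 0 ≤ l₁) (h₂ : 0 ≤ l₂) :
    StrictMonoOn (fun β => p₃ l₁ l₂ β / β ^ 2) (Ioi 0) := by
  intro x (hx : 0 < x) y (hy : 0 < y) hxy
  rw [div_lt_div_iff₀ (by positivity) (by positivity)]
  have key : p₃ l₁ l₂ y * x ^ 2 - p₃ l₁ l₂ x * y ^ 2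
      = (y - x) * (2 * l₁ * l₂ * x ^ 2 * y ^ 2 + (l₁ + l₂) * x * y + 2 * (x + y)) := by
    unfold p₃; ring
  have : 0 < (y - x) * (2 * l₁ * l₂ * x ^ 2 * y ^ 2 + (l₁ + l₂) * x * y + 2 * (x + y)) :=
    mul_pos (sub_pos.2 hxy) (by positivity)
  linarith

section root

variable {r β : ℝ}

theorem p₃_neg_iff_lt_root (h₁ : 0 ≤ l₁) (h₂ : 0 ≤ l₂) (hr : 0 < r) (hroot : p₃ l₁ l₂ r = 0)
    (hβ : 0 < β) : p₃ l₁ l₂ β < 0 ↔ β < r := by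
  rw [← (strictMonoOn_p₃_div_sq h₁ h₂).lt_iff_lt hβ hr]
  simp only [hroot, zero_div]
  rw [div_lt_iff₀ (by positivity), zero_mul]

theorem p₃_pos_iff_root_lt (h₁ : 0 ≤ l₁) (h₂ : 0 ≤ l₂) (hr : 0 < r) (hroot : p₃ l₁ l₂ r = 0)
    (hβ : 0 < β) : 0 < p₃ l₁ l₂ β ↔ r < β := by
  rw [← (strictMonoOn_p₃_div_sq h₁ h₂).lt_iff_lt hr hβ]
  simp only [hroot, zero_div]
  rw [lt_div_iff₀ (by positivity), zero_mul]

theorem eq_root_of_p₃_eq_zero (h₁ : 0 ≤ l₁) (h₂ : 0 ≤ l₂) (hr : 0 < r)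
    (hroot : p₃ l₁ l₂ r = 0) (hβ : 0 < β) (hβroot : p₃ l₁ l₂ β = 0) : β = r :=
  (strictMonoOn_p₃_div_sq h₁ h₂).injOn hβ hr (by simp only [hβroot, hroot, zero_div])

end root

theorem upperBracket_pos {l : ℝ} (hl : 0 < l) : 0 < upperBracket l := by
  unfold upperBracket; positivity

theorem mul_upperBracket_sq_sub {l : ℝ} (hl : 0 < l) :
    l * (upperBracket l ^ 2 - upperBracket l) = 2 := by
  have hs : √(l * (l + 8)) ^ 2 = l * (l + 8) := sq_sqrt (by positivity)
  unfold upperBracket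
  field_simp
  linear_combination hs

theorem p₃_upperBracket_pos (h₁ : 0 < l₁) (h₂ : 0 < l₂) : 0 < p₃ l₁ l₂ (upperBracket l₁) := by
  set u := upperBracket l₁
  have hq := mul_upperBracket_sq_sub h₁
  have hu : 0 < u ^ 2 - u := pos_of_mul_pos_right (hq ▸ two_pos) h₁.le
  have hp : p₃ l₁ l₂ u = 2 * l₁ * l₂ * u ^ 3 + l₂ * (u ^ 2 - u) := by
    unfold p₃; linear_combination hq
  have := upperBracket_pos h₁
  rw [hp]; positivity

theorem lowerBracket_pos (h₁ : 0 < l₁) (h₂ : 0 < l₂) : 0 < lowerBracket l₁ l₂ := by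
  unfold lowerBracket
  refine div_pos (sub_pos.2 ((lt_sqrt (by positivity)).2 ?_)) (by positivity)
  nlinarith [mul_pos (mul_pos h₁ h₂) (add_pos h₁ h₂)]

theorem lowerBracket_isCritical (h₁ : 0 < l₁) (h₂ : 0 < l₂) :
    6 * l₁ * l₂ * lowerBracket l₁ l₂ ^ 2 + 2 * (l₁ + l₂) * lowerBracket l₁ l₂ = l₁ + l₂ := by
  have ht : √((l₁ + l₂) * (l₁ + l₂ + 6 * l₁ * l₂)) ^ 2 = (l₁ + l₂) * (l₁ + l₂ + 6 * l₁ * l₂) :=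
    sq_sqrt (by positivity)
  unfold lowerBracket
  field_simp
  linear_combination ht

theorem p₃_lowerBracket_neg (h₁ : 0 < l₁) (h₂ : 0 < l₂) : p₃ l₁ l₂ (lowerBracket l₁ l₂) < 0 := by
  set L := lowerBracket l₁ l₂
  have hp : p₃ l₁ l₂ L = -(4 * l₁ * l₂ * L ^ 3 + (l₁ + l₂) * L ^ 2 + 2) := by
    unfold p₃; linear_combination L * lowerBracket_isCritical h₁ h₂
  have := lowerBracket_pos h₁ h₂
  rw [hp, neg_lt_zero]; positivity

end

/-- For `λ₁, λ₂ > 0`, the cubic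
`p₃(β) := 2λ₁λ₂β³ + (λ₁+λ₂)β² - (λ₁+λ₂)β - 2` has a unique positive root `β₊`, and it
satisfies
`(√((λ₁+λ₂)(λ₁+λ₂+6λ₁λ₂)) - (λ₁+λ₂))/(6λ₁λ₂) < β₊ <
  min ((λ₁+√(λ₁(λ₁+8)))/(2λ₁)) ((λ₂+√(λ₂(λ₂+8)))/(2λ₂))`. -/
theorem cubic_unique_positive_root_brackets
    (l₁ l₂ : ℝ) (hl₁ : 0 < l₁) (hl₂ : 0 < l₂) :
    ∃ βp : ℝ,
      (0 < βp ∧ 2 * l₁ * l₂ * βp ^ 3 + (l₁ + l₂) * βp ^ 2 - (l₁ + l₂) * βp - 2 = 0) ∧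
      (∀ β : ℝ, 0 < β →
        2 * l₁ * l₂ * β ^ 3 + (l₁ + l₂) * β ^ 2 - (l₁ + l₂) * β - 2 = 0 → β = βp) ∧
      (Real.sqrt ((l₁ + l₂) * (l₁ + l₂ + 6 * l₁ * l₂)) - (l₁ + l₂)) / (6 * l₁ * l₂) < βp ∧
      βp < min ((l₁ + Real.sqrt (l₁ * (l₁ + 8))) / (2 * l₁))
               ((l₂ + Real.sqrt (l₂ * (l₂ + 8))) / (2 * l₂)) := by
  obtain ⟨βp, ⟨hβp, -⟩, hroot⟩ : ∃ β ∈ Ioo 0 (upperBracket l₁), p₃ l₁ l₂ β = 0 :=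
    intermediate_value_Ioo (upperBracket_pos hl₁).le continuous_p₃.continuousOn
      ⟨by rw [p₃_zero]; norm_num, p₃_upperBracket_pos hl₁ hl₂⟩
  have above_of_pos {β : ℝ} (hβ : 0 < β) (h : 0 < p₃ l₁ l₂ β) : βp < β :=
    (p₃_pos_iff_root_lt hl₁.le hl₂.le hβp hroot hβ).1 h
  refine ⟨βp, ⟨hβp, hroot⟩, fun β hβ => eq_root_of_p₃_eq_zero hl₁.le hl₂.le hβp hroot hβ,
    (p₃_neg_iff_lt_root hl₁.le hl₂.le hβp hroot (lowerBracket_pos hl₁ hl₂)).1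
      (p₃_lowerBracket_neg hl₁ hl₂),
    lt_min (above_of_pos (upperBracket_pos hl₁) (p₃_upperBracket_pos hl₁ hl₂))
      (above_of_pos (upperBracket_pos hl₂) ?_)⟩
  rw [p₃_comm]
  exact p₃_upperBracket_pos hl₂ hl₁
end

section
/- Let d ≥ 1 and λ₁,…,λ_d > 0. Define ψ : (0,∞) → ℝ by ψ(x) := (Σ_{i=1}^{d} 1/(1+xλᵢ)) / (Σ_{i=1}^{d} λᵢ/(1+xλᵢ)). Then ψ is positive, monotonically increasing, and concave on (0,∞); consequently g(x) := √(ψ(x)) is also positive, monotonically increasing, and concave on (0,∞). -/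
/-!
Since `1 / (1 + xλ) = 1 - x · λ / (1 + xλ)`, the numerator of `ψ` equals `d - x D(x)` with
`D(x) = ∑ λᵢ / (1 + xλᵢ) = ∑ 1 / (λᵢ⁻¹ + x)`, so `ψ(x) = d / D(x) - x`. The harmonic sum
`u ↦ (∑ 1 / uᵢ)⁻¹` is concave on the positive orthant (Cauchy–Schwarz, with equality at the
weights `1 / uᵢ`), hence so is `1 / D` and therefore `ψ`. A concave function on `(0, ∞)` that is
bounded below is monotone, and `√` is concave and monotone.
-/

open Finset Set

theorem concaveOn_inv_sum_inv {ι : Type*} (s : Finset ι) :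
    ConcaveOn ℝ ((s : Set ι).pi fun _ => Ioi 0) fun u : ι → ℝ => (∑ i ∈ s, (u i)⁻¹)⁻¹ := by
  have hconv : Convex ℝ ((s : Set ι).pi fun _ => Ioi (0 : ℝ)) :=
    convex_pi fun _ _ => convex_Ioi 0
  refine ⟨hconv, fun u hu v hv a b ha hb hab => ?_⟩
  rcases s.eq_empty_or_nonempty with rfl | hs
  · simp
  set c := a • u + b • v with hc_def
  have hc : ∀ i ∈ s, 0 < c i := fun i hi => hconv hu hv ha hb hab i hi
  set S := ∑ i ∈ s, (c i)⁻¹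
  have hS : 0 < S := sum_pos (fun i hi => inv_pos.2 (hc i hi)) hs
  have cauchy_schwarz : ∀ w ∈ (s : Set ι).pi fun _ => Ioi (0 : ℝ),
      S ^ 2 * (∑ i ∈ s, (w i)⁻¹)⁻¹ ≤ ∑ i ∈ s, (c i)⁻¹ ^ 2 * w i := fun w hw => by
    simpa [div_eq_mul_inv] using
      sq_sum_div_le_sum_sq_div s (fun i => (c i)⁻¹) (fun i hi => inv_pos.2 (hw i hi))
  have hcS : ∑ i ∈ s, (c i)⁻¹ ^ 2 * c i = S :=
    sum_congr rfl fun i hi => by field_simp [(hc i hi).ne']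
  have hS_mul : S ^ 2 * (a • (∑ i ∈ s, (u i)⁻¹)⁻¹ + b • (∑ i ∈ s, (v i)⁻¹)⁻¹) ≤ S :=
    calc _ = a * (S ^ 2 * (∑ i ∈ s, (u i)⁻¹)⁻¹) + b * (S ^ 2 * (∑ i ∈ s, (v i)⁻¹)⁻¹) := by
          simp only [smul_eq_mul]; ring
      _ ≤ a * ∑ i ∈ s, (c i)⁻¹ ^ 2 * u i + b * ∑ i ∈ s, (c i)⁻¹ ^ 2 * v i := by
          gcongr
          exacts [cauchy_schwarz u hu, cauchy_schwarz v hv]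
      _ = S := by
          rw [← hcS, mul_sum, mul_sum, ← sum_add_distrib]
          refine sum_congr rfl fun i _ => ?_
          simp only [hc_def, Pi.add_apply, Pi.smul_apply, smul_eq_mul]
          ring
  calc _ ≤ S / S ^ 2 := by rw [le_div_iff₀ (by positivity)]; linarith
    _ = S⁻¹ := by rw [sq, div_mul_cancel_left₀ hS.ne']

theorem concaveOn_inv_sum_inv_add {ι : Type*} (s : Finset ι) {c : ι → ℝ}
    (hc : ∀ i ∈ s, 0 ≤ c i) : ConcaveOn ℝ (Ioi 0) fun x => (∑ i ∈ s, (c i + x)⁻¹)⁻¹ := by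
  have hmem : ∀ x ∈ Ioi (0 : ℝ), (fun i => c i + x) ∈ (s : Set ι).pi fun _ => Ioi 0 :=
    fun x hx i hi => add_pos_of_nonneg_of_pos (hc i hi) hx
  refine ⟨convex_Ioi 0, fun x hx y hy a b ha hb hab => ?_⟩
  convert (concaveOn_inv_sum_inv s).2 (hmem x hx) (hmem y hy) ha hb hab using 5 with i
  simp only [Pi.add_apply, Pi.smul_apply, smul_eq_mul]
  linear_combination (-c i) * hab

theorem ConcaveOn.monotoneOn_of_bddBelow {𝕜 : Type*} [Field 𝕜] [LinearOrder 𝕜]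
    [IsStrictOrderedRing 𝕜] {s : Set 𝕜} {f : 𝕜 → 𝕜} (hf : ConcaveOn 𝕜 s f)
    (hs : ¬BddAbove s) (hfs : BddBelow (f '' s)) : MonotoneOn f s := by
  intro x hx y hy hxy
  obtain ⟨B, hB⟩ := hfs
  rcases hxy.eq_or_lt with rfl | hxy
  · rfl
  by_contra! hyx
  -- beyond `y` the graph stays below the chord through `x` and `y`, whose slope `-m` is negative
  set m := (f x - f y) / (y - x)
  have hm : 0 < m := div_pos (sub_pos.2 hyx) (sub_pos.2 hxy)
  have hBy : B ≤ f y := hB (mem_image_of_mem f hy)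
  obtain ⟨z, hz, hzy⟩ := not_bddAbove_iff.1 hs (y + (f y - B) / m)
  have hyz : y < z :=
    (le_add_of_nonneg_right (div_nonneg (sub_nonneg.2 hBy) hm.le)).trans_lt hzy
  have hslope := hf.slope_anti_adjacent hx hz hxy hyz
  rw [show (f y - f x) / (y - x) = -m by rw [← neg_div, neg_sub],
    div_le_iff₀ (sub_pos.2 hyz)] at hslope
  have hzB : f y - B < (z - y) * m := (div_lt_iff₀ hm).1 (by linarith)
  linarith [hB (mem_image_of_mem f hz)]

theorem ConcaveOn.sqrt {E : Type*} [AddCommMonoid E] [Module ℝ E] {s : Set E} {f : E → ℝ}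
    (hf : ConcaveOn ℝ s f) (hf₀ : ∀ x ∈ s, 0 ≤ f x) : ConcaveOn ℝ s fun x => √(f x) :=
  ⟨hf.1, fun x hx y hy _ _ ha hb hab =>
    (Real.strictConcaveOn_sqrt.concaveOn.2 (hf₀ x hx) (hf₀ y hy) ha hb hab).trans
      (Real.sqrt_le_sqrt (hf.2 hx hy ha hb hab))⟩

section Resolvent

variable {ι : Type*} [Fintype ι] {lam : ι → ℝ} {x : ℝ}

theorem sum_one_div_one_add_mul (hx : ∀ i, 1 + x * lam i ≠ 0) :
    ∑ i, 1 / (1 + x * lam i) = Fintype.card ι - x * ∑ i, lam i / (1 + x * lam i) := by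
  have hterm : ∀ i, 1 / (1 + x * lam i) = 1 - x * (lam i / (1 + x * lam i)) := fun i => by
    field_simp [hx i]
    ring
  simp only [hterm, sum_sub_distrib, ← mul_sum, sum_const, card_univ, nsmul_eq_mul, mul_one]

theorem div_one_add_mul_eq_inv_add {l : ℝ} (hl : l ≠ 0) : l / (1 + x * l) = (l⁻¹ + x)⁻¹ := by
  rw [show l⁻¹ + x = (1 + x * l) / l by field_simp, inv_div]

theorem sum_div_sum_pos [Nonempty ι] (hlam : ∀ i, 0 < lam i) (hx : 0 ≤ x) :
    0 < (∑ i, 1 / (1 + x * lam i)) / ∑ i, lam i / (1 + x * lam i) := by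
  have hden : ∀ i, 0 < 1 + x * lam i := fun i => by nlinarith [hlam i]
  exact div_pos (sum_pos (fun i _ => one_div_pos.2 (hden i)) univ_nonempty)
    (sum_pos (fun i _ => div_pos (hlam i) (hden i)) univ_nonempty)

theorem concaveOn_sum_div_sum [Nonempty ι] (hlam : ∀ i, 0 < lam i) :
    ConcaveOn ℝ (Ioi 0) fun x => (∑ i, 1 / (1 + x * lam i)) / ∑ i, lam i / (1 + x * lam i) := by
  have hconc := ((concaveOn_inv_sum_inv_add univ (c := fun i => (lam i)⁻¹)
    fun i _ => (inv_pos.2 (hlam i)).le).smul (Nat.cast_nonneg (Fintype.card ι))).sub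
    (convexOn_id (convex_Ioi 0))
  refine hconc.congr fun x (hx : 0 < x) => ?_
  have hden : ∀ i, 0 < 1 + x * lam i := fun i => by nlinarith [hlam i]
  have hD : 0 < ∑ i, lam i / (1 + x * lam i) :=
    sum_pos (fun i _ => div_pos (hlam i) (hden i)) univ_nonempty
  have hD_eq : ∑ i, ((lam i)⁻¹ + x)⁻¹ = ∑ i, lam i / (1 + x * lam i) :=
    sum_congr rfl fun i _ => (div_one_add_mul_eq_inv_add (hlam i).ne').symm
  simp only [Pi.sub_apply, smul_eq_mul, id, hD_eq]
  rw [sum_one_div_one_add_mul fun i => (hden i).ne', sub_div, mul_div_cancel_right₀ _ hD.ne', div_eq_mul_inv]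

end Resolvent

/-- For `d ≥ 1` and `λ₁, …, λ_d > 0`, the map
`ψ(x) := (∑ i, 1/(1+xλᵢ)) / (∑ i, λᵢ/(1+xλᵢ))` is positive, monotonically increasing and
concave on `(0, ∞)`; consequently `g := √ ∘ ψ` is also positive, monotonically increasing
and concave on `(0, ∞)`. -/
theorem psi_pos_mono_concave
    (d : ℕ) (hd : 1 ≤ d) (lam : Fin d → ℝ) (hlam : ∀ i, 0 < lam i)
    (ψ : ℝ → ℝ)
    (hψ : ∀ x : ℝ, ψ x =
      (∑ i, 1 / (1 + x * lam i)) / (∑ i, lam i / (1 + x * lam i)))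
    (g : ℝ → ℝ) (hg : ∀ x : ℝ, g x = Real.sqrt (ψ x)) :
    ((∀ x ∈ Ioi (0 : ℝ), 0 < ψ x) ∧ MonotoneOn ψ (Ioi 0) ∧ ConcaveOn ℝ (Ioi 0) ψ) ∧
    ((∀ x ∈ Ioi (0 : ℝ), 0 < g x) ∧ MonotoneOn g (Ioi 0) ∧ ConcaveOn ℝ (Ioi 0) g) := by
  obtain rfl : g = fun x => √(ψ x) := funext hg
  have : Nonempty (Fin d) := ⟨⟨0, hd⟩⟩
  have hpos : ∀ x ∈ Ioi (0 : ℝ), 0 < ψ x := fun x hx => hψ x ▸ sum_div_sum_pos hlam hx.le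
  have hconc : ConcaveOn ℝ (Ioi 0) ψ :=
    (concaveOn_sum_div_sum hlam).congr fun x _ => (hψ x).symm
  have hmono : MonotoneOn ψ (Ioi 0) :=
    hconc.monotoneOn_of_bddBelow (not_bddAbove_Ioi 0)
      ⟨0, forall_mem_image.2 fun x hx => (hpos x hx).le⟩
  exact ⟨⟨hpos, hmono, hconc⟩, fun x hx => Real.sqrt_pos.2 (hpos x hx),
    fun x hx y hy hxy => Real.sqrt_le_sqrt (hmono hx hy hxy),
    hconc.sqrt fun x hx => (hpos x hx).le⟩
end

section
/- Let d ≥ 1 and λ₁,…,λ_d > 0, and define g : (0,∞) → (0,∞) by g(β) := ( (Σ_{i=1}^{d} 1/(1+βλᵢ)) / (Σ_{i=1}^{d} λᵢ/(1+βλᵢ)) )^{1/2}. Then g has a unique fixed point β₊ ∈ (0,∞), and for every initial guess β₀ > 0 the iterates gⁿ(β₀) converge to β₊ as n → ∞. -/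
/-!
`g² = N/D` with `N(β) = ∑ 1/(1 + βλᵢ)` and `D(β) = ∑ λᵢ/(1 + βλᵢ)`. Symmetrizing the double sum
`N(β₂)D(β₁) - N(β₁)D(β₂)` over pairs `(i, j)` shows that `g` is nondecreasing on `[0, ∞)`.
Moreover `g β ≤ β` iff `Φ(β) := β²D(β) - N(β) = ∑ (β²λᵢ - 1)/(1 + βλᵢ) ≥ 0`, and `Φ` is strictly
increasing with `Φ(0) < 0 < Φ(B)` for large `B`. Hence `g` has exactly one fixed point `β₊`, lies
above the diagonal on `(0, β₊]` and below it on `[β₊, ∞)`; from either side the iterates of the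
monotone continuous map `g` are monotone and bounded by `β₊`, so they converge to a fixed point,
which can only be `β₊`.
-/

open Finset Filter Topology Set

section Iterate

variable {α : Type*} [ConditionallyCompleteLinearOrder α] [TopologicalSpace α] [OrderTopology α]
  {f : α → α} {x p : α}

theorem tendsto_iterate_of_le_map_of_le_fixedPt (hmono : MonotoneOn f (Icc x p))
    (hcont : ContinuousOn f (Icc x p)) (hxp : x ≤ p) (hx : x ≤ f x) (hp : f p = p)
    (huniq : ∀ y ∈ Icc x p, f y = y → y = p) :
    Tendsto (fun n => f^[n] x) atTop (𝓝 p) := by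
  set u : ℕ → α := fun n => f^[n] x
  have hsucc (n : ℕ) : u (n + 1) = f (u n) := Function.iterate_succ_apply' f n x
  have hmem (n : ℕ) : u n ∈ Icc x p := by
    induction n with
    | zero => exact ⟨le_rfl, hxp⟩
    | succ n ih =>
      rw [hsucc]
      exact ⟨hx.trans (hmono ⟨le_rfl, hxp⟩ ih ih.1),
        hp ▸ hmono ih ⟨hxp, le_rfl⟩ ih.2⟩
  have hu : Monotone u := monotone_nat_of_le_succ fun n => by
    induction n with
    | zero => exact hx
    | succ n ih => rw [hsucc, hsucc (n + 1)]; exact hmono (hmem n) (hmem (n + 1)) ih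
  have hlim := tendsto_atTop_ciSup hu ⟨p, forall_mem_range.2 fun n => (hmem n).2⟩
  set L := ⨆ n, u n
  have hL : L ∈ Icc x p := isClosed_Icc.mem_of_tendsto hlim (Eventually.of_forall hmem)
  have hfL : Tendsto (fun n => f (u n)) atTop (𝓝 (f L)) :=
    (hcont L hL).tendsto.comp (tendsto_nhdsWithin_iff.2 ⟨hlim, Eventually.of_forall hmem⟩)
  have hLfix : f L = L :=
    tendsto_nhds_unique hfL (by simpa only [hsucc] using (tendsto_add_atTop_iff_nat 1).2 hlim)
  rwa [← huniq L hL hLfix]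

theorem tendsto_iterate_of_map_le_of_fixedPt_le (hmono : MonotoneOn f (Icc p x))
    (hcont : ContinuousOn f (Icc p x)) (hpx : p ≤ x) (hx : f x ≤ x) (hp : f p = p)
    (huniq : ∀ y ∈ Icc p x, f y = y → y = p) :
    Tendsto (fun n => f^[n] x) atTop (𝓝 p) := by
  have hIcc : Icc (OrderDual.toDual x) (OrderDual.toDual p) = Icc p x := Set.Icc_toDual
  exact tendsto_iterate_of_le_map_of_le_fixedPt (α := αᵒᵈ) (hIcc ▸ hmono.dual)
    (hIcc ▸ hcont) hpx hx hp (hIcc ▸ huniq)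

end Iterate

theorem Finset.sum_sum_nonneg_of_add_swap_nonneg {ι R : Type*} [AddCommGroup R] [LinearOrder R]
    [IsOrderedAddMonoid R] (s : Finset ι) {F : ι → ι → R}
    (hF : ∀ i ∈ s, ∀ j ∈ s, 0 ≤ F i j + F j i) : 0 ≤ ∑ i ∈ s, ∑ j ∈ s, F i j := by
  have hsymm : 0 ≤ (∑ i ∈ s, ∑ j ∈ s, F i j) + ∑ i ∈ s, ∑ j ∈ s, F i j := by
    nth_rewrite 2 [Finset.sum_comm]
    simpa only [← Finset.sum_add_distrib] using
      Finset.sum_nonneg fun i hi => Finset.sum_nonneg fun j hj => hF i hi j hj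
  by_contra! h
  exact (add_neg h h).not_ge hsymm

namespace FixedPointIteration

variable {ι : Type*} {lam : ι → ℝ} {β β₁ β₂ : ℝ}

lemma one_add_mul_pos (hlam : ∀ i, 0 < lam i) (hβ : 0 ≤ β) (i : ι) : 0 < 1 + β * lam i := by
  have := hlam i
  positivity

variable [Fintype ι]

noncomputable def resolventTrace (lam : ι → ℝ) (β : ℝ) : ℝ := ∑ i, 1 / (1 + β * lam i)

noncomputable def weightedResolventTrace (lam : ι → ℝ) (β : ℝ) : ℝ := ∑ i, lam i / (1 + β * lam i)

noncomputable def fixedPointMap (lam : ι → ℝ) (β : ℝ) : ℝ :=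
  √(resolventTrace lam β / weightedResolventTrace lam β)

noncomputable def fixedPointDefect (lam : ι → ℝ) (β : ℝ) : ℝ :=
  ∑ i, (β ^ 2 * lam i - 1) / (1 + β * lam i)

lemma resolventTrace_pos [Nonempty ι] (hlam : ∀ i, 0 < lam i) (hβ : 0 ≤ β) :
    0 < resolventTrace lam β :=
  Finset.sum_pos (fun i _ => one_div_pos.2 (one_add_mul_pos hlam hβ i)) univ_nonempty

lemma weightedResolventTrace_pos [Nonempty ι] (hlam : ∀ i, 0 < lam i) (hβ : 0 ≤ β) :
    0 < weightedResolventTrace lam β :=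
  Finset.sum_pos (fun i _ => div_pos (hlam i) (one_add_mul_pos hlam hβ i)) univ_nonempty

lemma resolventTrace_mul_weightedResolventTrace_le (hlam : ∀ i, 0 < lam i) (h₁ : 0 ≤ β₁)
    (h₁₂ : β₁ ≤ β₂) :
    resolventTrace lam β₁ * weightedResolventTrace lam β₂ ≤
      resolventTrace lam β₂ * weightedResolventTrace lam β₁ := by
  have hq₁ := one_add_mul_pos hlam h₁
  have hq₂ := one_add_mul_pos hlam (h₁.trans h₁₂)
  set P : ι → ι → ℝ := fun i j =>
    (1 + β₁ * lam i) * (1 + β₂ * lam i) * (1 + β₁ * lam j) * (1 + β₂ * lam j)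
  have hP (i j : ι) : 0 < P i j := by
    have := hq₁ i; have := hq₂ i; have := hq₁ j; have := hq₂ j
    positivity
  set G : ι → ι → ℝ := fun i j => (β₂ - β₁) * (lam j * (lam j - lam i)) / P i j
  have hterm (i j : ι) : 1 / (1 + β₂ * lam i) * (lam j / (1 + β₁ * lam j)) -
      1 / (1 + β₁ * lam i) * (lam j / (1 + β₂ * lam j)) = G i j := by
    have := hq₁ i; have := hq₂ i; have := hq₁ j; have := hq₂ j
    rw [div_mul_div_comm, div_mul_div_comm, div_sub_div _ _ (by positivity) (by positivity),
      div_eq_div_iff (by positivity) (hP i j).ne']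
    ring
  have hG : 0 ≤ ∑ i, ∑ j, G i j := Finset.sum_sum_nonneg_of_add_swap_nonneg univ fun i _ j _ => by
    have hswap : G i j + G j i = (β₂ - β₁) * (lam j - lam i) ^ 2 / P i j := by
      simp only [G]
      rw [show P j i = P i j by simp only [P]; ring, ← add_div]
      ring
    rw [hswap]
    exact div_nonneg (mul_nonneg (sub_nonneg.2 h₁₂) (sq_nonneg _)) (hP i j).le
  simp only [← hterm, Finset.sum_sub_distrib, ← Finset.mul_sum, ← Finset.sum_mul] at hG
  simp only [resolventTrace, weightedResolventTrace]
  linarith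

lemma monotoneOn_fixedPointMap [Nonempty ι] (hlam : ∀ i, 0 < lam i) :
    MonotoneOn (fixedPointMap lam) (Ici 0) := fun β₁ h₁ β₂ _ h₁₂ => by
  apply Real.sqrt_le_sqrt
  rw [div_le_div_iff₀ (weightedResolventTrace_pos hlam h₁)
    (weightedResolventTrace_pos hlam (le_trans h₁ h₁₂))]
  exact resolventTrace_mul_weightedResolventTrace_le hlam h₁ h₁₂

lemma continuousOn_fixedPointMap [Nonempty ι] (hlam : ∀ i, 0 < lam i) :
    ContinuousOn (fixedPointMap lam) (Ici 0) := by
  have hq (i : ι) : ∀ β ∈ Ici (0 : ℝ), 1 + β * lam i ≠ 0 := fun β hβ =>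
    (one_add_mul_pos hlam hβ i).ne'
  refine (ContinuousOn.div ?_ ?_ fun β hβ => (weightedResolventTrace_pos hlam hβ).ne').sqrt
  · exact continuousOn_finsetSum _ fun i _ => continuousOn_const.div (by fun_prop) (hq i)
  · exact continuousOn_finsetSum _ fun i _ => continuousOn_const.div (by fun_prop) (hq i)

lemma fixedPointDefect_eq :
    fixedPointDefect lam β = β ^ 2 * weightedResolventTrace lam β - resolventTrace lam β := by
  simp only [fixedPointDefect, weightedResolventTrace, resolventTrace, Finset.mul_sum,
    ← Finset.sum_sub_distrib]
  refine Finset.sum_congr rfl fun i _ => ?_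
  ring

lemma fixedPointMap_le_iff [Nonempty ι] (hlam : ∀ i, 0 < lam i) (hβ : 0 ≤ β) :
    fixedPointMap lam β ≤ β ↔ 0 ≤ fixedPointDefect lam β := by
  rw [fixedPointMap, Real.sqrt_le_left hβ, div_le_iff₀ (weightedResolventTrace_pos hlam hβ),
    fixedPointDefect_eq, sub_nonneg]

lemma le_fixedPointMap_iff [Nonempty ι] (hlam : ∀ i, 0 < lam i) (hβ : 0 ≤ β) :
    β ≤ fixedPointMap lam β ↔ fixedPointDefect lam β ≤ 0 := by
  rw [fixedPointMap, Real.le_sqrt hβ (div_pos (resolventTrace_pos hlam hβ)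
    (weightedResolventTrace_pos hlam hβ)).le, le_div_iff₀ (weightedResolventTrace_pos hlam hβ),
    fixedPointDefect_eq, sub_nonpos]

lemma fixedPointMap_eq_iff [Nonempty ι] (hlam : ∀ i, 0 < lam i) (hβ : 0 ≤ β) :
    fixedPointMap lam β = β ↔ fixedPointDefect lam β = 0 := by
  rw [le_antisymm_iff, fixedPointMap_le_iff hlam hβ, le_fixedPointMap_iff hlam hβ, and_comm,
    ← le_antisymm_iff]

lemma strictMonoOn_fixedPointDefect [Nonempty ι] (hlam : ∀ i, 0 < lam i) :
    StrictMonoOn (fixedPointDefect lam) (Ici 0) := fun β₁ h₁ β₂ h₂ h₁₂ => by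
  refine Finset.sum_lt_sum_of_nonempty univ_nonempty fun i _ => ?_
  rw [div_lt_div_iff₀ (one_add_mul_pos hlam h₁ i) (one_add_mul_pos hlam h₂ i)]
  have hl := hlam i
  have hβ₁ : (0 : ℝ) ≤ β₁ := h₁
  have hβ₂ : (0 : ℝ) ≤ β₂ := h₂
  have hgap : 0 < lam i * (β₂ - β₁) * (1 + β₁ + β₂ + lam i * β₁ * β₂) :=
    mul_pos (mul_pos hl (sub_pos.2 h₁₂)) (by positivity)
  linear_combination hgap

lemma continuousOn_fixedPointDefect (hlam : ∀ i, 0 < lam i) :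
    ContinuousOn (fixedPointDefect lam) (Ici 0) :=
  continuousOn_finsetSum _ fun i _ =>
    ContinuousOn.div (by fun_prop) (by fun_prop) fun β hβ => (one_add_mul_pos hlam hβ i).ne'

lemma fixedPointDefect_zero_neg [Nonempty ι] : fixedPointDefect lam 0 < 0 := by
  simp [fixedPointDefect, Fintype.card_pos]

lemma exists_fixedPointDefect_pos [Nonempty ι] (hlam : ∀ i, 0 < lam i) :
    ∃ B, 0 < B ∧ 0 < fixedPointDefect lam B := by
  set B := 1 + ∑ i, (lam i)⁻¹
  have hB (i : ι) : 1 + (lam i)⁻¹ ≤ B :=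
    add_le_add_right (Finset.single_le_sum (fun j _ => (inv_pos.2 (hlam j)).le) (mem_univ i)) 1
  have hB₁ : 1 ≤ B := le_add_of_nonneg_right (Finset.sum_nonneg fun i _ => (inv_pos.2 (hlam i)).le)
  refine ⟨B, by linarith, Finset.sum_pos (fun i _ => div_pos ?_ ?_) univ_nonempty⟩
  · have hl := hlam i
    have hBl : 1 + lam i ≤ B * lam i := by
      calc 1 + lam i = (1 + (lam i)⁻¹) * lam i := by field_simp; ring
        _ ≤ B * lam i := mul_le_mul_of_nonneg_right (hB i) hl.le
    nlinarith
  · exact one_add_mul_pos hlam (by linarith) i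

lemma exists_pos_fixedPointDefect_eq_zero [Nonempty ι] (hlam : ∀ i, 0 < lam i) :
    ∃ β, 0 < β ∧ fixedPointDefect lam β = 0 := by
  obtain ⟨B, hB₀, hB⟩ := exists_fixedPointDefect_pos hlam
  obtain ⟨β, hβ, hβ0⟩ := intermediate_value_Icc hB₀.le
    ((continuousOn_fixedPointDefect hlam).mono Icc_subset_Ici_self)
    ⟨fixedPointDefect_zero_neg.le, hB.le⟩
  refine ⟨β, hβ.1.lt_of_ne ?_, hβ0⟩
  rintro rfl
  exact fixedPointDefect_zero_neg.ne hβ0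

end FixedPointIteration

open FixedPointIteration

/-- For `d ≥ 1` and `λ₁, …, λ_d > 0`, the map
`g(β) := √( (∑ i, 1/(1+βλᵢ)) / (∑ i, λᵢ/(1+βλᵢ)) )` has a unique fixed point `β₊ ∈ (0, ∞)`,
and for every initial guess `β₀ > 0` the iterates `gⁿ(β₀)` converge to `β₊` as `n → ∞`. -/
theorem fixed_point_iteration_converges
    (d : ℕ) (hd : 1 ≤ d) (lam : Fin d → ℝ) (hlam : ∀ i, 0 < lam i)
    (g : ℝ → ℝ)
    (hg : ∀ β : ℝ, g β =
      Real.sqrt ((∑ i, 1 / (1 + β * lam i)) / (∑ i, lam i / (1 + β * lam i)))) :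
    ∃ βp : ℝ, 0 < βp ∧ g βp = βp ∧
      (∀ β : ℝ, 0 < β → g β = β → β = βp) ∧
      ∀ β₀ : ℝ, 0 < β₀ → Tendsto (fun n : ℕ => g^[n] β₀) atTop (nhds βp) := by
  have : Nonempty (Fin d) := ⟨⟨0, hd⟩⟩
  obtain rfl : g = fixedPointMap lam := funext hg
  obtain ⟨βp, hβp, hΦ⟩ := exists_pos_fixedPointDefect_eq_zero hlam
  have hΦmono := strictMonoOn_fixedPointDefect hlam
  have hfix : ∀ β, 0 ≤ β → (fixedPointMap lam β = β ↔ β = βp) := fun β hβ => by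
    rw [fixedPointMap_eq_iff hlam hβ, ← hΦ]
    exact hΦmono.injOn.eq_iff hβ hβp.le
  have hβpfix := (hfix βp hβp.le).2 rfl
  refine ⟨βp, hβp, hβpfix, fun β hβ => (hfix β hβ.le).1, fun β₀ hβ₀ => ?_⟩
  have hmono := monotoneOn_fixedPointMap hlam
  have hcont := continuousOn_fixedPointMap hlam
  rcases le_total β₀ βp with h | h
  · have hsub : Icc β₀ βp ⊆ Ici 0 := fun β hβ => hβ₀.le.trans hβ.1
    refine tendsto_iterate_of_le_map_of_le_fixedPt (hmono.mono hsub) (hcont.mono hsub) h ?_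
      hβpfix fun β hβ => (hfix β (hsub hβ)).1
    exact (le_fixedPointMap_iff hlam hβ₀.le).2 (hΦ ▸ hΦmono.monotoneOn hβ₀.le hβp.le h)
  · have hsub : Icc βp β₀ ⊆ Ici 0 := fun β hβ => hβp.le.trans hβ.1
    refine tendsto_iterate_of_map_le_of_fixedPt_le (hmono.mono hsub) (hcont.mono hsub) h ?_
      hβpfix fun β hβ => (hfix β (hsub hβ)).1
    exact (fixedPointMap_le_iff hlam hβ₀.le).2 (hΦ ▸ hΦmono.monotoneOn hβp.le hβ₀.le h)
end

section
/- Let Q₁, Q₂ be real symmetric positive definite d×d matrices and q₁, q₂ ∈ ℝ^d. For β > 0 let Q(β) := (1 + 1/β)Q₁ + (1 + β)Q₂. Then for every β > 0, the Minkowski sum of the ellipsoids E(q₁,Q₁) and E(q₂,Q₂) is contained in the ellipsoid E(q₁+q₂, Q(β)); that is, for all x, y ∈ ℝ^d with (x−q₁)ᵀQ₁⁻¹(x−q₁) ≤ 1 and (y−q₂)ᵀQ₂⁻¹(y−q₂) ≤ 1, one has (x+y−q₁−q₂)ᵀ Q(β)⁻¹ (x+y−q₁−q₂) ≤ 1. 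-/
/-!
The quadratic form `u ↦ uᵀ A⁻¹ u` of a positive definite `A` is the supremum of the affine
functions `u ↦ 2 wᵀu - wᵀA w`, attained at `w = A⁻¹ u`. Evaluating this at the maximiser
`w = (A + B)⁻¹ (u + v)` for `A + B` and splitting gives the subadditivity
`(u + v)ᵀ (A + B)⁻¹ (u + v) ≤ uᵀ A⁻¹ u + vᵀ B⁻¹ v`. With `A = (1 + 1/β) Q₁`, `B = (1 + β) Q₂`
the right-hand side is at most `β / (1 + β) + 1 / (1 + β) = 1`.
-/

open Matrix

namespace Matrix

variable {n : Type*} [Fintype n] {A B : Matrix n n ℝ}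

lemma IsHermitian.dotProduct_mulVec_comm (hA : A.IsHermitian) (x y : n → ℝ) :
    x ⬝ᵥ A *ᵥ y = y ⬝ᵥ A *ᵥ x := by
  have hAt : Aᵀ = A := by simpa [conjTranspose_eq_transpose_of_trivial] using hA.eq
  rw [dotProduct_mulVec, ← mulVec_transpose, dotProduct_comm, hAt]

lemma dotProduct_inv_mulVec_eq_two_mul_sub [DecidableEq n] (hA : IsUnit A.det) (u : n → ℝ) :
    u ⬝ᵥ A⁻¹ *ᵥ u = 2 * (A⁻¹ *ᵥ u ⬝ᵥ u) - A⁻¹ *ᵥ u ⬝ᵥ A *ᵥ (A⁻¹ *ᵥ u) := by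
  rw [mulVec_mulVec, mul_nonsing_inv _ hA, one_mulVec, dotProduct_comm]
  ring

lemma PosDef.two_dotProduct_sub_le_dotProduct_inv_mulVec [DecidableEq n] (hA : A.PosDef)
    (u w : n → ℝ) :
    2 * (w ⬝ᵥ u) - w ⬝ᵥ A *ᵥ w ≤ u ⬝ᵥ A⁻¹ *ᵥ u := by
  have hAAinv : A *ᵥ (A⁻¹ *ᵥ u) = u := by
    rw [mulVec_mulVec, mul_nonsing_inv _ hA.det_pos.ne'.isUnit, one_mulVec]
  have hnonneg : 0 ≤ (w - A⁻¹ *ᵥ u) ⬝ᵥ A *ᵥ (w - A⁻¹ *ᵥ u) := by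
    simpa using hA.posSemidef.dotProduct_mulVec_nonneg (w - A⁻¹ *ᵥ u)
  have hexpand : (w - A⁻¹ *ᵥ u) ⬝ᵥ A *ᵥ (w - A⁻¹ *ᵥ u) =
      w ⬝ᵥ A *ᵥ w - 2 * (w ⬝ᵥ u) + u ⬝ᵥ A⁻¹ *ᵥ u := by
    rw [mulVec_sub, hAAinv, sub_dotProduct, dotProduct_sub, dotProduct_sub,
      hA.isHermitian.dotProduct_mulVec_comm (A⁻¹ *ᵥ u) w, hAAinv,
      dotProduct_comm (A⁻¹ *ᵥ u) u]
    ring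
  linarith

lemma PosDef.add_dotProduct_inv_add_mulVec_le [DecidableEq n] (hA : A.PosDef) (hB : B.PosDef)
    (u v : n → ℝ) :
    (u + v) ⬝ᵥ (A + B)⁻¹ *ᵥ (u + v) ≤ u ⬝ᵥ A⁻¹ *ᵥ u + v ⬝ᵥ B⁻¹ *ᵥ v := by
  set w := (A + B)⁻¹ *ᵥ (u + v)
  have hsplit : (u + v) ⬝ᵥ (A + B)⁻¹ *ᵥ (u + v) =
      (2 * (w ⬝ᵥ u) - w ⬝ᵥ A *ᵥ w) + (2 * (w ⬝ᵥ v) - w ⬝ᵥ B *ᵥ w) := by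
    rw [dotProduct_inv_mulVec_eq_two_mul_sub (hA.add hB).det_pos.ne'.isUnit, add_mulVec,
      dotProduct_add, dotProduct_add]
    ring
  rw [hsplit]
  exact add_le_add (hA.two_dotProduct_sub_le_dotProduct_inv_mulVec u w)
    (hB.two_dotProduct_sub_le_dotProduct_inv_mulVec v w)

lemma dotProduct_inv_smul_mulVec [DecidableEq n] (hA : IsUnit A.det) {c : ℝ} (hc : c ≠ 0)
    (u : n → ℝ) :
    u ⬝ᵥ (c • A)⁻¹ *ᵥ u = c⁻¹ * (u ⬝ᵥ A⁻¹ *ᵥ u) := by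
  let := invertibleOfNonzero hc
  rw [inv_smul A c hA, invOf_eq_inv, smul_mulVec, dotProduct_smul, smul_eq_mul]

end Matrix

/-- For real symmetric positive definite `d × d` matrices `Q₁, Q₂`, centers
`q₁, q₂ ∈ ℝ^d` and any `β > 0`, the Minkowski sum of the ellipsoids `E(q₁, Q₁)` and
`E(q₂, Q₂)` is contained in the ellipsoid `E(q₁ + q₂, Q(β))`,
where `Q(β) := (1 + 1/β) Q₁ + (1 + β) Q₂`. -/
theorem minkowski_sum_subset_parametrized_ellipsoid
    (d : ℕ) (Q₁ Q₂ : Matrix (Fin d) (Fin d) ℝ)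
    (hQ₁ : Q₁.PosDef) (hQ₂ : Q₂.PosDef)
    (q₁ q₂ : Fin d → ℝ) (β : ℝ) (hβ : 0 < β) :
    ∀ x y : Fin d → ℝ,
      (x - q₁) ⬝ᵥ (Q₁⁻¹ *ᵥ (x - q₁)) ≤ 1 →
      (y - q₂) ⬝ᵥ (Q₂⁻¹ *ᵥ (y - q₂)) ≤ 1 →
      (x + y - q₁ - q₂) ⬝ᵥ (((1 + 1 / β) • Q₁ + (1 + β) • Q₂)⁻¹ *ᵥ (x + y - q₁ - q₂)) ≤ 1 := by
  intro x y hx hy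
  have hc₁ : 0 < 1 + 1 / β := by positivity
  have hc₂ : 0 < 1 + β := by positivity
  have hweights : (1 + 1 / β)⁻¹ + (1 + β)⁻¹ = 1 := by
    field_simp
    ring
  rw [show x + y - q₁ - q₂ = (x - q₁) + (y - q₂) by abel]
  calc _ ≤ (x - q₁) ⬝ᵥ ((1 + 1 / β) • Q₁)⁻¹ *ᵥ (x - q₁)
          + (y - q₂) ⬝ᵥ ((1 + β) • Q₂)⁻¹ *ᵥ (y - q₂) :=
        (hQ₁.smul hc₁).add_dotProduct_inv_add_mulVec_le (hQ₂.smul hc₂) _ _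
    _ = (1 + 1 / β)⁻¹ * ((x - q₁) ⬝ᵥ Q₁⁻¹ *ᵥ (x - q₁))
          + (1 + β)⁻¹ * ((y - q₂) ⬝ᵥ Q₂⁻¹ *ᵥ (y - q₂)) := by
        rw [dotProduct_inv_smul_mulVec hQ₁.det_pos.ne'.isUnit hc₁.ne',
          dotProduct_inv_smul_mulVec hQ₂.det_pos.ne'.isUnit hc₂.ne']
    _ ≤ (1 + 1 / β)⁻¹ * 1 + (1 + β)⁻¹ * 1 := by gcongr
    _ = 1 := by rw [mul_one, mul_one, hweights]
end
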